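/- Every automaton (A_i, X, δ_i; φ_{i,j}, T) built by the Construction is a semiconnected retractable automaton whose kernel is A_{i_0}. -/

import Mathlib

universe u v

/-- The transition function extended to words (`X*`). -/
def deltaStar {A X : Type*} (δ : A → X → A) : A → List X → A
  | a, [] => a
  | a, x :: p => deltaStar δ (δ a x) p

/-- `B` is a subautomaton of the automaton with transition `δ`. -/
def IsSubaut {A X : Type*} (δ : A → X → A) (B : Set A) : Prop :=
  B.Nonempty ∧ ∀ b ∈ B, ∀ x : X, δ b x ∈ B

/-- `φ` is a retract homomorphism of the automaton onto the subautomaton `B`: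
a homomorphism of `A` onto `B` leaving the elements of `B` fixed. -/
def IsRetractHom {A X : Type*} (δ : A → X → A) (B : Set A) (φ : A → A) : Prop :=
  (∀ a, φ a ∈ B) ∧ (∀ b ∈ B, φ b = b) ∧ ∀ a x, φ (δ a x) = δ (φ a) x

/-- `B` is a retract subautomaton. -/
def IsRetract {A X : Type*} (δ : A → X → A) (B : Set A) : Prop :=
  ∃ φ, IsRetractHom δ B φ

/-- An automaton is retractable if every subautomaton is retract. -/
def Retractable {A X : Type*} (δ : A → X → A) : Prop :=
  ∀ B, IsSubaut δ B → IsRetract δ B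

/-- Retractability of the subautomaton on the carrier `D` (homomorphisms are
represented by functions on the ambient state set, restricted to `D`). -/
def RetractableOn {A X : Type*} (δ : A → X → A) (D : Set A) : Prop :=
  ∀ C ⊆ D, IsSubaut δ C →
    ∃ φ : A → A, (∀ a ∈ D, φ a ∈ C) ∧ (∀ c ∈ C, φ c = c) ∧
      ∀ a ∈ D, ∀ x, φ (δ a x) = δ (φ a) x

/-- The principal subautomaton `R(a) = δ(a, X*)` generated by `a`. -/
def Rset {A X : Type*} (δ : A → X → A) (a : A) : Set A :=
  {b | ∃ p : List X, deltaStar δ a p = b}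

/-- The `R`-class `R_a = {b : R(b) = R(a)}`. -/
def Rclass {A X : Type*} (δ : A → X → A) (a : A) : Set A :=
  {b | Rset δ b = Rset δ a}

/-- `R[a] = R(a) − R_a`. -/
def Rideal {A X : Type*} (δ : A → X → A) (a : A) : Set A :=
  Rset δ a \ Rclass δ a

/-- The Rees congruence induced by `B`: two states are related iff they are
equal or both lie in `B`. -/
def reesRel {A : Type*} (B : Set A) (u v : A) : Prop :=
  u = v ∨ (u ∈ B ∧ v ∈ B)

/-- A minimal subautomaton: a subautomaton with no proper subautomaton. -/
def IsMinimalSubaut {A X : Type*} (δ : A → X → A) (B : Set A) : Prop :=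
  IsSubaut δ B ∧ ∀ C ⊆ B, IsSubaut δ C → C = B

/-- The automaton has a kernel: a subautomaton contained in every subautomaton. -/
def HasKernel {A X : Type*} (δ : A → X → A) : Prop :=
  ∃ K, IsSubaut δ K ∧ ∀ B, IsSubaut δ B → K ⊆ B

/-- The principal factor `R{a}` (the Rees factor of `R(a)` modulo `R[a]`,
described via the Rees congruence) is strongly connected. -/
def FactorSC {A X : Type*} (δ : A → X → A) (a : A) : Prop :=
  ∀ b ∈ Rset δ a, ∀ c ∈ Rset δ a,
    ∃ p : List X, p ≠ [] ∧ reesRel (Rideal δ a) (deltaStar δ b p) c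

/-- The principal factor `R{a}` is a strongly trap-connected non-trivial
one-trap automaton (with trap the class of `t`). -/
def FactorSTC {A X : Type*} (δ : A → X → A) (a : A) : Prop :=
  ∃ t ∈ Rset δ a,
    (∀ x, reesRel (Rideal δ a) (δ t x) t) ∧
    (∃ b ∈ Rset δ a, ¬ reesRel (Rideal δ a) b t) ∧
    (∀ b ∈ Rset δ a, (∀ x, reesRel (Rideal δ a) (δ b x) b) → reesRel (Rideal δ a) b t) ∧
    (∀ b ∈ Rset δ a, ∀ c ∈ Rset δ a, ¬ reesRel (Rideal δ a) b t →
      ∃ p : List X, p ≠ [] ∧ reesRel (Rideal δ a) (deltaStar δ b p) c)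

/-- The principal factor `R{a}` is a strongly trapped non-trivial one-trap
automaton (with trap the class of `t`). -/
def FactorST {A X : Type*} (δ : A → X → A) (a : A) : Prop :=
  ∃ t ∈ Rset δ a,
    (∃ b ∈ Rset δ a, ¬ reesRel (Rideal δ a) b t) ∧
    (∀ b ∈ Rset δ a, (∀ x, reesRel (Rideal δ a) (δ b x) b) → reesRel (Rideal δ a) b t) ∧
    (∀ b ∈ Rset δ a, ∀ x, reesRel (Rideal δ a) (δ b x) t)

/-- Semiconnected: every principal factor is strongly connected or strongly
trap-connected. -/
def Semiconnected {A X : Type*} (δ : A → X → A) : Prop :=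
  ∀ a, FactorSC δ a ∨ FactorSTC δ a

/-- The subautomaton on `D` is semiconnected, via the characterization: for
every subautomaton `C ⊆ D` and every `a ∈ C` there are `b ∈ C` and a nonempty
word `p` with `a = δ(b,p)`. -/
def SemiconnectedOn {A X : Type*} (δ : A → X → A) (D : Set A) : Prop :=
  ∀ C ⊆ D, IsSubaut δ C → ∀ a ∈ C, ∃ b ∈ C, ∃ p : List X, p ≠ [] ∧ deltaStar δ b p = a

/-- The automaton is a dilation of its subautomaton `B`. -/
def IsDilationOf {A X : Type*} (δ : A → X → A) (B : Set A) : Prop :=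
  IsSubaut δ B ∧ ∃ φ : A → A, (∀ a, φ a ∈ B) ∧ (∀ b ∈ B, φ b = b) ∧
    ∀ a x, δ a x = δ (φ a) x

/-- Extension of a partial transition function (`none` = the removed trap)
to words. -/
def pStar {C X : Type*} (d : C → X → Option C) : C → List X → Option C
  | a, [] => some a
  | a, x :: p => (d a x).bind fun b => pStar d b p

/-- The data of the Construction: a finite tree `(T, le)` with least element
`i0`; `C i` is the trap-removed part `A⁰ᵢ` of the automaton `Aᵢ`, with partial
transition `d i` (`none` means the trap); `A_{i0}` is strongly connected and
the other `Aᵢ` are non-trivial strongly trap-connected one-trap automata;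
`Φ i j` are the composite partial homomorphisms along covering chains
(given here as coherent data whose covering components satisfy conditions
(ii) and (iii)); `δ'` is the glued transition function on `A = ⋃ A⁰ᵢ`. -/
def ConstructionSpec {X : Type*} (T : Type*) (le : T → T → Prop) (i0 : T)
    (C : T → Type*) (d : ∀ i, C i → X → Option (C i))
    (Φ : ∀ i j, le j i → C i → C j)
    (δ' : (Σ i, C i) → X → Σ i, C i) : Prop :=
  (∀ i, le i i) ∧ (∀ i j, le i j → le j i → i = j) ∧
  (∀ i j k, le i j → le j k → le i k) ∧
  Finite T ∧
  (∀ S : Set T, S.Nonempty → (∃ u, ∀ i ∈ S, le i u) → ∃ g ∈ S, ∀ i ∈ S, le i g) ∧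
  (∀ i, le i0 i) ∧
  Nonempty (C i0) ∧
  (∀ (a : C i0) (x : X), (d i0 a x).isSome) ∧
  (∀ a b : C i0, ∃ p : List X, p ≠ [] ∧ pStar (d i0) a p = some b) ∧
  (∀ i, i ≠ i0 → Nonempty (C i) ∧
    (∀ a b : C i, ∃ p : List X, p ≠ [] ∧ pStar (d i) a p = some b) ∧
    (∀ a : C i, ∃ p : List X, p ≠ [] ∧ pStar (d i) a p = none)) ∧
  (∀ i (h : le i i) (a : C i), Φ i i h a = a) ∧
  (∀ i j k (h1 : le j i) (h2 : le k j) (h3 : le k i) (a : C i),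
    Φ j k h2 (Φ i j h1 a) = Φ i k h3 a) ∧
  (∀ i j (h : le j i), i ≠ j → (∀ k, le j k → le k i → k = j ∨ k = i) →
    (∀ (a : C i) (x : X) (b : C i),
      d i a x = some b → d j (Φ i j h a) x = some (Φ i j h b)) ∧
    ∃ (a : C i) (x : X), d i a x = none ∧ (d j (Φ i j h a) x).isSome) ∧
  (∀ i (a : C i) (x : X), ∃ (j : T) (hj : le j i) (b : C j),
    δ' ⟨i, a⟩ x = ⟨j, b⟩ ∧ d j (Φ i j hj a) x = some b ∧
    ∀ k (hk : le k i), (d k (Φ i k hk a) x).isSome → le k j)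

/-! Inside a level, `δ'` is the transition of `Aᵢ`, and every level is strongly connected,
so every subautomaton is a union of whole levels and every state lies on a cycle. A state of a
level `i ≠ i0` can be driven into the trap of `Aᵢ`, which in `δ'` means dropping to a strictly
lower level; by finiteness of `T` one reaches `A_{i0}`, which is therefore the kernel. For a
subautomaton `B`, send a state of level `i` by `Φ` to the greatest full level of `B` below `i`
(the levels below `i` form a chain); the homomorphism property follows from the maximality
clause defining `δ'` together with the fact that the composites `Φ` respect defined
transitions. -/

theorem deltaStar_append {A X : Type*} (δ : A → X → A) (a : A) (p q : List X) :
    deltaStar δ a (p ++ q) = deltaStar δ (deltaStar δ a p) q := by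
  induction p generalizing a with
  | nil => rfl
  | cons x p ih => exact ih (δ a x)

theorem IsSubaut.deltaStar_mem {A X : Type*} {δ : A → X → A} {B : Set A} (hB : IsSubaut δ B)
    {a : A} (ha : a ∈ B) (p : List X) : deltaStar δ a p ∈ B := by
  induction p generalizing a with
  | nil => exact ha
  | cons x p ih => exact ih (hB.2 a ha x)

def IsFullFiber {ι : Type*} {C : ι → Type*} (B : Set (Σ i, C i)) (k : ι) : Prop :=
  ∀ a : C k, (⟨k, a⟩ : Σ i, C i) ∈ B

namespace ConstructionSpec

variable {X T : Type*} {le : T → T → Prop} {i0 : T} {C : T → Type*}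
  {d : ∀ i, C i → X → Option (C i)} {Φ : ∀ i j, le j i → C i → C j}
  {δ' : (Σ i, C i) → X → Σ i, C i}

theorem refl (h : ConstructionSpec T le i0 C d Φ δ') (i : T) : le i i := h.1 i

theorem antisymm (h : ConstructionSpec T le i0 C d Φ δ') {i j : T} (hij : le i j)
    (hji : le j i) : i = j := h.2.1 i j hij hji

theorem trans (h : ConstructionSpec T le i0 C d Φ δ') {i j k : T} (hij : le i j)
    (hjk : le j k) : le i k := h.2.2.1 i j k hij hjk

theorem finite (h : ConstructionSpec T le i0 C d Φ δ') : Finite T := h.2.2.2.1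

theorem exists_greatest (h : ConstructionSpec T le i0 C d Φ δ') {S : Set T} (hS : S.Nonempty)
    (hbdd : ∃ u, ∀ i ∈ S, le i u) : ∃ g ∈ S, ∀ i ∈ S, le i g := h.2.2.2.2.1 S hS hbdd

theorem i0_le (h : ConstructionSpec T le i0 C d Φ δ') (i : T) : le i0 i := h.2.2.2.2.2.1 i

theorem nonempty_i0 (h : ConstructionSpec T le i0 C d Φ δ') : Nonempty (C i0) :=
  h.2.2.2.2.2.2.1

theorem isSome_d_i0 (h : ConstructionSpec T le i0 C d Φ δ') (a : C i0) (x : X) :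
    (d i0 a x).isSome := h.2.2.2.2.2.2.2.1 a x

theorem exists_pStar_eq_some (h : ConstructionSpec T le i0 C d Φ δ') (i : T) (a b : C i) :
    ∃ p : List X, p ≠ [] ∧ pStar (d i) a p = some b := by
  by_cases hi : i = i0
  · subst hi; exact h.2.2.2.2.2.2.2.2.1 a b
  · exact (h.2.2.2.2.2.2.2.2.2.1 i hi).2.1 a b

theorem exists_pStar_eq_none (h : ConstructionSpec T le i0 C d Φ δ') {i : T} (hi : i ≠ i0)
    (a : C i) : ∃ p : List X, p ≠ [] ∧ pStar (d i) a p = none :=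
  (h.2.2.2.2.2.2.2.2.2.1 i hi).2.2 a

theorem Φ_self (h : ConstructionSpec T le i0 C d Φ δ') {i : T} (hii : le i i) (a : C i) :
    Φ i i hii a = a := h.2.2.2.2.2.2.2.2.2.2.1 i hii a

theorem Φ_Φ (h : ConstructionSpec T le i0 C d Φ δ') {i j k : T} (hji : le j i) (hkj : le k j)
    (hki : le k i) (a : C i) : Φ j k hkj (Φ i j hji a) = Φ i k hki a :=
  h.2.2.2.2.2.2.2.2.2.2.2.1 i j k hji hkj hki a

theorem d_Φ_eq_some_of_covby (h : ConstructionSpec T le i0 C d Φ δ') {i j : T} (hji : le j i)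
    (hne : i ≠ j) (hcov : ∀ k, le j k → le k i → k = j ∨ k = i) {a b : C i} {x : X}
    (hd : d i a x = some b) : d j (Φ i j hji a) x = some (Φ i j hji b) :=
  (h.2.2.2.2.2.2.2.2.2.2.2.2.1 i j hji hne hcov).1 a x b hd

theorem δ'_spec (h : ConstructionSpec T le i0 C d Φ δ') (i : T) (a : C i) (x : X) :
    ∃ (j : T) (hj : le j i) (b : C j), δ' ⟨i, a⟩ x = ⟨j, b⟩ ∧ d j (Φ i j hj a) x = some b ∧
      ∀ k (hk : le k i), (d k (Φ i k hk a) x).isSome → le k j :=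
  h.2.2.2.2.2.2.2.2.2.2.2.2.2 i a x

theorem wellFounded (h : ConstructionSpec T le i0 C d Φ δ') :
    WellFounded fun j i : T => le j i ∧ j ≠ i :=
  have := h.finite
  have : IsTrans T fun j i => le j i ∧ j ≠ i :=
    ⟨fun _ _ _ hab hbc => ⟨h.trans hab.1 hbc.1, fun e => by
      subst e; exact hab.2 (h.antisymm hab.1 hbc.1)⟩⟩
  have : Std.Irrefl fun j i : T => le j i ∧ j ≠ i := ⟨fun _ hi => hi.2 rfl⟩
  Finite.wellFounded_of_trans_of_irrefl _

/-- Below `i` the levels form a chain, so each `k < i` lies below a level covered by `i`. -/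
theorem exists_covby_of_lt (h : ConstructionSpec T le i0 C d Φ δ') {i k : T} (hki : le k i)
    (hne : k ≠ i) :
    ∃ g, le k g ∧ le g i ∧ i ≠ g ∧ ∀ m, le g m → le m i → m = g ∨ m = i := by
  obtain ⟨g, ⟨hkg, hgi, hgne⟩, hgmax⟩ :=
    h.exists_greatest (S := {m | le k m ∧ le m i ∧ m ≠ i}) ⟨k, h.refl k, hki, hne⟩
      ⟨i, fun m hm => hm.2.1⟩
  refine ⟨g, hkg, hgi, Ne.symm hgne, fun m hgm hmi => ?_⟩
  by_cases hm : m = i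
  · exact Or.inr hm
  · exact Or.inl (h.antisymm (hgmax m ⟨h.trans hkg hgm, hmi, hm⟩) hgm)

theorem d_Φ_eq_some (h : ConstructionSpec T le i0 C d Φ δ') {i k : T} (hki : le k i)
    {a b : C i} {x : X} (hd : d i a x = some b) : d k (Φ i k hki a) x = some (Φ i k hki b) := by
  induction i using h.wellFounded.induction generalizing k with
  | _ i ih =>
  by_cases hk : k = i
  · subst hk
    rwa [h.Φ_self, h.Φ_self]
  obtain ⟨g, hkg, hgi, hig, hcov⟩ := h.exists_covby_of_lt hki hk
  have := ih g ⟨hgi, Ne.symm hig⟩ hkg (h.d_Φ_eq_some_of_covby hgi hig hcov hd)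
  rwa [h.Φ_Φ hgi hkg hki, h.Φ_Φ hgi hkg hki] at this

theorem δ'_eq_of_greatest (h : ConstructionSpec T le i0 C d Φ δ') {i j : T} (hji : le j i)
    {a : C i} {x : X} {b : C j} (hd : d j (Φ i j hji a) x = some b)
    (hmax : ∀ k (hk : le k i), (d k (Φ i k hk a) x).isSome → le k j) :
    δ' ⟨i, a⟩ x = ⟨j, b⟩ := by
  obtain ⟨m, hmi, c, he, hc, hmmax⟩ := h.δ'_spec i a x
  obtain rfl : m = j := h.antisymm (hmax m hmi (by simp [hc])) (hmmax j hji (by simp [hd]))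
  obtain rfl : c = b := Option.some_injective _ (hc.symm.trans hd)
  exact he

theorem δ'_eq_of_d_eq_some (h : ConstructionSpec T le i0 C d Φ δ') {i : T} {a b : C i} {x : X}
    (hd : d i a x = some b) : δ' ⟨i, a⟩ x = ⟨i, b⟩ :=
  h.δ'_eq_of_greatest (h.refl i) (by rwa [h.Φ_self]) fun _ hk _ => hk

theorem deltaStar_eq_of_pStar_eq_some (h : ConstructionSpec T le i0 C d Φ δ') {i : T}
    {a b : C i} {p : List X} (hp : pStar (d i) a p = some b) :
    deltaStar δ' ⟨i, a⟩ p = ⟨i, b⟩ := by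
  induction p generalizing a with
  | nil => cases hp; rfl
  | cons x p ih =>
    cases hx : d i a x with
    | none => simp [pStar, hx] at hp
    | some c =>
      simp only [pStar, hx, Option.bind_some] at hp
      simp only [deltaStar, h.δ'_eq_of_d_eq_some hx]
      exact ih hp

theorem exists_deltaStar_eq_self (h : ConstructionSpec T le i0 C d Φ δ') (z : Σ i, C i) :
    ∃ p : List X, p ≠ [] ∧ deltaStar δ' z p = z := by
  obtain ⟨p, hp, hpz⟩ := h.exists_pStar_eq_some z.1 z.2 z.2
  exact ⟨p, hp, h.deltaStar_eq_of_pStar_eq_some hpz⟩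

theorem isFullFiber_of_mem (h : ConstructionSpec T le i0 C d Φ δ') {B : Set (Σ i, C i)}
    (hB : IsSubaut δ' B) {i : T} {a : C i} (ha : ⟨i, a⟩ ∈ B) : IsFullFiber B i := fun b => by
  obtain ⟨p, -, hp⟩ := h.exists_pStar_eq_some i a b
  simpa [h.deltaStar_eq_of_pStar_eq_some hp] using hB.deltaStar_mem ha p

theorem exists_deltaStar_lt_of_pStar_eq_none (h : ConstructionSpec T le i0 C d Φ δ') {i : T}
    {a : C i} {p : List X} (hp : pStar (d i) a p = none) :
    ∃ (q : List X) (j : T) (b : C j), le j i ∧ j ≠ i ∧ deltaStar δ' ⟨i, a⟩ q = ⟨j, b⟩ := by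
  induction p generalizing a with
  | nil => cases hp
  | cons x p ih =>
    cases hx : d i a x with
    | none =>
      obtain ⟨j, hji, b, he, hb, -⟩ := h.δ'_spec i a x
      refine ⟨[x], j, b, hji, ?_, he⟩
      rintro rfl
      simp [h.Φ_self, hx] at hb
    | some c =>
      simp only [pStar, hx, Option.bind_some] at hp
      obtain ⟨q, j, b, hji, hne, hq⟩ := ih hp
      exact ⟨x :: q, j, b, hji, hne, by simpa [deltaStar, h.δ'_eq_of_d_eq_some hx] using hq⟩

theorem exists_deltaStar_eq_i0 (h : ConstructionSpec T le i0 C d Φ δ') (i : T) (a : C i) :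
    ∃ (p : List X) (b : C i0), deltaStar δ' ⟨i, a⟩ p = ⟨i0, b⟩ := by
  induction i using h.wellFounded.induction with
  | _ i ih =>
  by_cases hi : i = i0
  · subst hi; exact ⟨[], a, rfl⟩
  obtain ⟨p, -, hp⟩ := h.exists_pStar_eq_none hi a
  obtain ⟨q, j, b, hji, hne, hq⟩ := h.exists_deltaStar_lt_of_pStar_eq_none hp
  obtain ⟨r, c, hr⟩ := ih j ⟨hji, hne⟩ b
  exact ⟨q ++ r, c, by rw [deltaStar_append, hq, hr]⟩

theorem isSubaut_fiber_i0 (h : ConstructionSpec T le i0 C d Φ δ') :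
    IsSubaut δ' {z : Σ i, C i | z.1 = i0} := by
  refine ⟨⟨⟨i0, Classical.choice h.nonempty_i0⟩, rfl⟩, ?_⟩
  rintro ⟨i, a⟩ (rfl : i = i0) x
  obtain ⟨b, hb⟩ := Option.isSome_iff_exists.mp (h.isSome_d_i0 a x)
  simp [h.δ'_eq_of_d_eq_some hb]

theorem fiber_i0_subset (h : ConstructionSpec T le i0 C d Φ δ') {R : Set (Σ i, C i)}
    (hR : IsSubaut δ' R) : {z : Σ i, C i | z.1 = i0} ⊆ R := by
  obtain ⟨⟨i, a⟩, ha⟩ := hR.1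
  obtain ⟨p, b, hp⟩ := h.exists_deltaStar_eq_i0 i a
  have hb := hR.deltaStar_mem ha p
  rw [hp] at hb
  rintro ⟨j, c⟩ (rfl : j = i0)
  exact h.isFullFiber_of_mem hR hb c

theorem exists_greatest_isFullFiber_le (h : ConstructionSpec T le i0 C d Φ δ')
    {B : Set (Σ i, C i)} (hB : IsSubaut δ' B) (i : T) :
    ∃ g, (IsFullFiber B g ∧ le g i) ∧ ∀ k, IsFullFiber B k → le k i → le k g := by
  obtain ⟨g, hg, hgmax⟩ := h.exists_greatest (S := {k | IsFullFiber B k ∧ le k i})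
    ⟨i0, fun _ => h.fiber_i0_subset hB rfl, h.i0_le i⟩ ⟨i, fun _ hk => hk.2⟩
  exact ⟨g, hg, fun k hk hki => hgmax k ⟨hk, hki⟩⟩

def retraction (Φ : ∀ i j, le j i → C i → C j) {B : Set (Σ i, C i)} (g : T → T)
    (hg : ∀ i, IsFullFiber B (g i) ∧ le (g i) i) (z : Σ i, C i) : Σ i, C i :=
  ⟨g z.1, Φ z.1 (g z.1) (hg z.1).2 z.2⟩

theorem retraction_δ' (h : ConstructionSpec T le i0 C d Φ δ')
    {B : Set (Σ i, C i)} (hB : IsSubaut δ' B) (g : T → T)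
    (hg : ∀ i, IsFullFiber B (g i) ∧ le (g i) i)
    (hgmax : ∀ i k, IsFullFiber B k → le k i → le k (g i)) (z : Σ i, C i) (x : X) :
    retraction Φ g hg (δ' z x) = δ' (retraction Φ g hg z) x := by
  obtain ⟨i, a⟩ := z
  obtain ⟨m, hmi, b, he, hb, hmmax⟩ := h.δ'_spec i a x
  obtain ⟨n, hn, c, he', hc, hnmax⟩ := h.δ'_spec (g i) (Φ i (g i) (hg i).2 a) x
  have hni : le n i := h.trans hn (hg i).2
  rw [h.Φ_Φ _ _ hni] at hc
  -- `n`, the level of `δ'` on the image, is full in `B`, hence lies below `g m`.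
  have hn_full : IsFullFiber B n :=
    h.isFullFiber_of_mem hB (he' ▸ hB.2 _ ((hg i).1 _) x)
  have hn_gm : le n (g m) := hgmax m n hn_full (hmmax n hni (by simp [hc]))
  have hgmi : le (g m) i := h.trans (hg m).2 hmi
  have hgm_gi : le (g m) (g i) := hgmax i (g m) (hg m).1 hgmi
  have hd : d (g m) (Φ (g i) (g m) hgm_gi (Φ i (g i) (hg i).2 a)) x
      = some (Φ m (g m) (hg m).2 b) := by
    rw [h.Φ_Φ _ _ hgmi, ← h.Φ_Φ hmi (hg m).2 hgmi]
    exact h.d_Φ_eq_some _ hb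
  show retraction Φ g hg (δ' ⟨i, a⟩ x) = _
  rw [he]
  exact (h.δ'_eq_of_greatest hgm_gi hd fun k hk hks => h.trans (hnmax k hk hks) hn_gm).symm

theorem isRetractHom_retraction (h : ConstructionSpec T le i0 C d Φ δ')
    {B : Set (Σ i, C i)} (hB : IsSubaut δ' B) (g : T → T)
    (hg : ∀ i, IsFullFiber B (g i) ∧ le (g i) i)
    (hgmax : ∀ i k, IsFullFiber B k → le k i → le k (g i)) :
    IsRetractHom δ' B (retraction Φ g hg) := by
  refine ⟨fun z => (hg z.1).1 _, ?_, h.retraction_δ' hB g hg hgmax⟩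
  rintro ⟨i, c⟩ hc
  have hgi : g i = i := h.antisymm (hg i).2 (hgmax i i (h.isFullFiber_of_mem hB hc) (h.refl i))
  suffices ∀ j (hji : le j i), j = i → (⟨j, Φ i j hji c⟩ : Σ i, C i) = ⟨i, c⟩ from
    this (g i) (hg i).2 hgi
  rintro j hji rfl
  rw [h.Φ_self]

theorem retractable (h : ConstructionSpec T le i0 C d Φ δ') : Retractable δ' := fun B hB => by
  choose g hg hgmax using h.exists_greatest_isFullFiber_le hB
  exact ⟨_, h.isRetractHom_retraction hB g hg hgmax⟩

end ConstructionSpec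

/-- every automaton of the Construction is a semiconnected
retractable automaton whose kernel is `A_{i0}`. -/
theorem stmt_17 {X T : Type*} (le : T → T → Prop) (i0 : T)
    (C : T → Type*) (d : ∀ i, C i → X → Option (C i))
    (Φ : ∀ i j, le j i → C i → C j) (δ' : (Σ i, C i) → X → Σ i, C i)
    (h : ConstructionSpec T le i0 C d Φ δ') :
    Retractable δ' ∧
    (∀ R : Set (Σ i, C i), IsSubaut δ' R → ∀ a ∈ R,
      ∃ b ∈ R, ∃ p : List X, p ≠ [] ∧ deltaStar δ' b p = a) ∧
    IsSubaut δ' {p : Σ i, C i | p.1 = i0} ∧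
    (∀ R : Set (Σ i, C i), IsSubaut δ' R → {p : Σ i, C i | p.1 = i0} ⊆ R) :=
  ⟨h.retractable, fun _ _ a ha => ⟨a, ha, h.exists_deltaStar_eq_self a⟩,
    h.isSubaut_fiber_i0, fun _ hR => h.fiber_i0_subset hR⟩
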